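/- Let P_n ∈ ℤ[t] satisfy Keel's recurrence P_3 = 1, P_{n+1} = (1+t)·P_n + (t/2)·∑_{j=2}^{n-2} C(n,j)·P_{j+1}·P_{n-j+1}. Then for every n ≥ 4, the coefficient of t^{n-4} in P_n equals the coefficient of t in P_n, which equals 2^{n-1} − C(n,2) − 1. -/

import Mathlib

/-!
Keel's recurrence preserves palindromicity: if each `P k` is palindromic of formal degree `k - 3`,
then `(1 + X) * P n` and every `X * P (j + 1) * P (n - j + 1)` are palindromic of formal degree
`n - 2`, hence so is `P (n + 1)`. Palindromicity of `P n` identifies its coefficients of `X ^ (n - 4)`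
and `X`. All constant terms are `1`, so the coefficient of `X` in the recurrence gives
`c (n + 1) = c n + 1 + (2 ^ n - 2 * n - 2) / 2`, which telescopes to `2 ^ (n - 1) - n.choose 2 - 1`.
-/

open Polynomial Finset

theorem Nat.sum_Icc_two_choose_add {n : ℕ} (hn : 3 ≤ n) :
    ∑ j ∈ Icc 2 (n - 2), n.choose j + 2 * n + 2 = 2 ^ n := by
  obtain ⟨m, rfl⟩ := Nat.exists_eq_add_of_le' hn
  rw [← Nat.sum_range_choose, sum_range_succ, sum_range_succ, sum_range_succ', sum_range_succ',
    show m + 3 - 2 = m + 1 by omega, ← Finset.Ico_add_one_right_eq_Icc, sum_Ico_eq_sum_range]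
  rw [show m + 1 + 1 - 2 = m by omega, Nat.choose_succ_self_right (m + 2), Nat.choose_self,
    Nat.choose_one_right, Nat.choose_zero_right]
  simp only [add_comm 2, add_assoc, one_add_one_eq_two]
  omega

namespace Polynomial

variable {R : Type*} [Semiring R]

/-- Palindromic of formal degree `N`: the leading coefficient may vanish, so `X` is palindromic
of formal degree `2`. -/
def IsPalindromic (N : ℕ) (p : R[X]) : Prop :=
  p.natDegree ≤ N ∧ p.reflect N = p

namespace IsPalindromic

variable {M N : ℕ} {p q : R[X]}

theorem coeff_sub (h : IsPalindromic N p) {k : ℕ} (hk : k ≤ N) :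
    p.coeff (N - k) = p.coeff k := by
  rw [← revAt_le hk, ← coeff_reflect, h.2]

theorem of_eq (h : IsPalindromic M p) (hMN : M = N) : IsPalindromic N p := hMN ▸ h

theorem add (hp : IsPalindromic N p) (hq : IsPalindromic N q) : IsPalindromic N (p + q) :=
  ⟨(natDegree_add_le _ _).trans (max_le hp.1 hq.1), by rw [reflect_add, hp.2, hq.2]⟩

theorem mul (hp : IsPalindromic M p) (hq : IsPalindromic N q) :
    IsPalindromic (M + N) (p * q) :=
  ⟨natDegree_mul_le.trans (add_le_add hp.1 hq.1), by rw [reflect_mul _ _ hp.1 hq.1, hp.2, hq.2]⟩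

end IsPalindromic

theorem isPalindromic_zero (N : ℕ) : IsPalindromic N (0 : R[X]) :=
  ⟨by simp, reflect_zero⟩

theorem isPalindromic_sum {ι : Type*} {s : Finset ι} {f : ι → R[X]} {N : ℕ}
    (h : ∀ i ∈ s, IsPalindromic N (f i)) : IsPalindromic N (∑ i ∈ s, f i) := by
  classical
  induction s using Finset.induction_on with
  | empty => exact isPalindromic_zero N
  | insert a s ha ih =>
    rw [sum_insert ha]
    exact (h a (mem_insert_self a s)).add (ih fun i hi => h i (mem_insert_of_mem hi))

theorem isPalindromic_C (c : R) : IsPalindromic 0 (C c) :=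
  ⟨by simp, by simp⟩

theorem isPalindromic_natCast (n : ℕ) : IsPalindromic 0 (n : R[X]) :=
  (C_eq_natCast (R := R) n) ▸ isPalindromic_C _

theorem isPalindromic_X : IsPalindromic 2 (X : R[X]) := by
  refine ⟨natDegree_X_le.trans one_le_two, ?_⟩
  simpa [revAt_le] using reflect_monomial (R := R) 2 1

theorem isPalindromic_one_add_X : IsPalindromic 1 (1 + X : R[X]) := by
  refine ⟨(natDegree_add_le _ _).trans (by simp [natDegree_X_le]), ?_⟩
  simpa [reflect_add, revAt_le] using add_comm (X : R[X]) 1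

end Polynomial

noncomputable def keelSum (P : ℕ → ℚ[X]) (n : ℕ) : ℚ[X] :=
  ∑ j ∈ Icc 2 (n - 2), (n.choose j : ℚ[X]) * P (j + 1) * P (n - j + 1)

def IsKeelSequence (P : ℕ → ℚ[X]) : Prop :=
  P 3 = 1 ∧ ∀ n, 3 ≤ n → P (n + 1) = (1 + X) * P n + C (1 / 2 : ℚ) * X * keelSum P n

namespace IsKeelSequence

variable {P : ℕ → ℚ[X]}

theorem coeff_zero (hP : IsKeelSequence P) {n : ℕ} (hn : 3 ≤ n) : (P n).coeff 0 = 1 := by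
  induction n, hn using Nat.le_induction with
  | base => simp [hP.1]
  | succ n hn ih => simp [hP.2 n hn, add_mul, mul_assoc, ih]

theorem coeff_zero_keelSum (hP : IsKeelSequence P) {n : ℕ} (hn : 3 ≤ n) :
    (keelSum P n).coeff 0 = 2 ^ n - 2 * n - 2 := by
  have hterm : ∀ j ∈ Icc 2 (n - 2),
      ((n.choose j : ℚ[X]) * P (j + 1) * P (n - j + 1)).coeff 0 = n.choose j := by
    intro j hj
    rw [mem_Icc] at hj
    rw [mul_assoc, ← C_eq_natCast, coeff_C_mul, mul_coeff_zero, hP.coeff_zero (by omega),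
      hP.coeff_zero (by omega), mul_one, mul_one]
  have hsum := congrArg (Nat.cast : ℕ → ℚ) (Nat.sum_Icc_two_choose_add hn)
  push_cast at hsum
  rw [keelSum, finsetSum_coeff, sum_congr rfl hterm]
  linarith

theorem coeff_one (hP : IsKeelSequence P) {n : ℕ} (hn : 3 ≤ n) :
    (P n).coeff 1 = 2 ^ (n - 1) - n.choose 2 - 1 := by
  induction n, hn using Nat.le_induction with
  | base => norm_num [hP.1, Polynomial.coeff_one, Nat.choose]
  | succ n hn ih =>
    have hcoeff : (P (n + 1)).coeff 1 =
        (P n).coeff 1 + (P n).coeff 0 + 1 / 2 * (keelSum P n).coeff 0 := by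
      simp [hP.2 n hn, add_mul, mul_assoc, coeff_X_mul]
    obtain ⟨k, rfl⟩ : ∃ k, n = k + 1 := ⟨n - 1, by omega⟩
    rw [hcoeff, ih, hP.coeff_zero hn, hP.coeff_zero_keelSum hn, Nat.choose_succ_succ' (k + 1),
      Nat.choose_one_right, Nat.add_sub_cancel, Nat.add_sub_cancel, pow_succ]
    push_cast
    ring

theorem isPalindromic (hP : IsKeelSequence P) {n : ℕ} (hn : 3 ≤ n) :
    IsPalindromic (n - 3) (P n) := by
  induction n using Nat.strong_induction_on with
  | _ n ih =>
  obtain rfl | hn := hn.eq_or_lt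
  · simpa [hP.1] using isPalindromic_C (1 : ℚ)
  obtain ⟨m, rfl⟩ : ∃ m, n = m + 1 := ⟨n - 1, by omega⟩
  have hm : 3 ≤ m := by omega
  have hsum : IsPalindromic (m - 4) (keelSum P m) := by
    refine isPalindromic_sum fun j hj => ?_
    rw [mem_Icc] at hj
    exact (((isPalindromic_natCast _).mul (ih (j + 1) (by omega) (by omega))).mul
      (ih (m - j + 1) (by omega) (by omega))).of_eq (by omega)
  have hquad : IsPalindromic (m + 1 - 3) (C (1 / 2 : ℚ) * X * keelSum P m) := by
    -- `keelSum P 3 = 0` is an empty sum, but `2 + (3 - 4) ≠ 3 + 1 - 3` in `ℕ`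
    rcases hm.eq_or_lt with rfl | hm
    · simpa [keelSum] using isPalindromic_zero (R := ℚ) 1
    · exact (((isPalindromic_C _).mul isPalindromic_X).mul hsum).of_eq (by omega)
  rw [hP.2 m hm]
  exact ((isPalindromic_one_add_X.mul (ih m (by omega) hm)).of_eq (by omega)).add hquad

end IsKeelSequence

theorem keel_second_betti (P : ℕ → Polynomial ℚ) (h3 : P 3 = 1)
    (hrec : ∀ n, 3 ≤ n → P (n + 1) = (1 + X) * P n +
      C (1/2 : ℚ) * X * ∑ j ∈ Icc 2 (n - 2),
        (n.choose j : Polynomial ℚ) * P (j + 1) * P (n - j + 1)) :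
    ∀ n, 4 ≤ n → (P n).coeff (n - 4) = (P n).coeff 1 ∧
      (P n).coeff 1 = 2 ^ (n - 1) - (n.choose 2 : ℚ) - 1 := by
  have hP : IsKeelSequence P := ⟨h3, hrec⟩
  intro n hn
  refine ⟨?_, hP.coeff_one (by omega)⟩
  rw [show n - 4 = n - 3 - 1 by omega]
  exact (hP.isPalindromic (by omega)).coeff_sub (by omega)
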